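/- Let q, t > 1 be real numbers and k ≥ 1 an integer. For every partition λ of k one has Σ_{ν⊢k} M(λ,ν) = 1, and M(λ,ν) > 0 for every partition ν of k; that is, M is a strictly positive stochastic matrix on the partitions of k. -/

import Mathlib

open Finset

/-- `z_λ = ∏_i i^{a_i(λ)} a_i(λ)!` for a multiset of parts. -/
def zWeight (m : Multiset ℕ) : ℕ :=
  ∏ i ∈ m.toFinset, i ^ m.count i * (m.count i).factorial

/-- `(x,y)_k = ∏_{i=0}^{k-1} (1 - x y^i)`. -/
noncomputable def poch (x y : ℝ) (k : ℕ) : ℝ :=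
  ∏ i ∈ Finset.range k, (1 - x * y ^ i)

/-- The measure `π_{q,t}` on partitions of `k`. -/
noncomputable def piQT (q t : ℝ) (k : ℕ) (l : Nat.Partition k) : ℝ :=
  (poch q q k / poch t q k) * ((zWeight l.parts : ℝ))⁻¹ *
    (l.parts.map (fun p => (1 - t ^ p) / (1 - q ^ p))).prod

/-- `π_{∞,t}` evaluated on a multiset of parts. -/
noncomputable def piInf (t : ℝ) (m : Multiset ℕ) : ℝ :=
  (t / (t - 1)) * ((zWeight m : ℝ))⁻¹ * (m.map (fun p => 1 - t⁻¹ ^ p)).prod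

/-- The weight `w_λ(κ)` of choosing the sub-multiset `κ` of kept parts. -/
noncomputable def wKeep (q : ℝ) (k : ℕ) (l κ : Multiset ℕ) : ℝ :=
  (q ^ k - 1)⁻¹ * ∏ i ∈ Finset.Icc 1 k,
    (Nat.choose (l.count i) (κ.count i) : ℝ) * (q ^ i - 1) ^ (l.count i - κ.count i)

/-- The auxiliary variables Markov kernel on partitions of `k`. -/
noncomputable def auxM (q t : ℝ) (k : ℕ) (l ν : Nat.Partition k) : ℝ :=
  ∑ κ ∈ l.parts.powerset.toFinset.filter (fun κ => κ ≤ ν.parts ∧ κ ≠ l.parts),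
    wKeep q k l.parts κ * piInf t (ν.parts - κ)

/-!
Summing over `ν` first turns `∑_ν M(λ, ν)` into `∑_{κ ⊊ λ} w_λ(κ) ∑_{μ ⊢ k - |κ|} π_{∞,t}(μ)`.
The inner sum is `1`: under `p_r ↦ 1 - t⁻ʳ` the sum `∑_{μ ⊢ n} p_μ / z_μ` is `h_n`, and Newton's
identity `n h_n = ∑_r p_r h_{n-r}` forces `h_n = 1 - t⁻¹` for `n ≥ 1`. Counting sub-multisets with
binomial coefficients, the weights over all `κ ⊆ λ` sum to
`∏_{p ∈ λ} (1 + (q^p - 1)) / (q^k - 1) = q^k / (q^k - 1)`, and `w_λ(λ) = 1 / (q^k - 1)`.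
Positivity comes from the term `κ = ∅`, which is always admissible.
-/

namespace Multiset

variable {α : Type*} [DecidableEq α]

theorem count_powerset_eq_prod_choose (l κ : Multiset α) {s : Finset α}
    (hs : κ.toFinset ⊆ s) :
    (powerset l).count κ = ∏ i ∈ s, (l.count i).choose (κ.count i) := by
  induction l using Multiset.induction generalizing κ with
  | empty =>
    rcases eq_or_ne κ 0 with rfl | hκ
    · simp
    obtain ⟨a, ha⟩ := exists_mem_of_ne_zero hκ
    rw [Finset.prod_eq_zero (hs (mem_toFinset.mpr ha))
      (Nat.choose_eq_zero_of_lt (by simpa using count_pos.mpr ha))]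
    simp [hκ]
  | cons a t ih =>
    rw [powerset_cons, count_add]
    by_cases ha : a ∈ κ
    · obtain ⟨κ', rfl⟩ := exists_cons_of_mem ha
      have has : a ∈ s := hs (by simp)
      rw [count_map_eq_count' _ _ (fun _ _ h => (cons_inj_right a).mp h), ih _ hs,
        ih κ' ((toFinset_subset.mpr (subset_cons κ' a)).trans hs), ← mul_prod_erase s _ has,
        ← mul_prod_erase s _ has, ← mul_prod_erase s _ has]
      have hl (u v : Multiset α) : ∏ i ∈ s.erase a, (count i (a ::ₘ u)).choose (count i v) =
          ∏ i ∈ s.erase a, (count i u).choose (count i v) :=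
        prod_congr rfl fun i hi => by rw [count_cons_of_ne (ne_of_mem_erase hi)]
      have hr (u v : Multiset α) : ∏ i ∈ s.erase a, (count i u).choose (count i (a ::ₘ v)) =
          ∏ i ∈ s.erase a, (count i u).choose (count i v) :=
        prod_congr rfl fun i hi => by rw [count_cons_of_ne (ne_of_mem_erase hi)]
      rw [hl, hr, count_cons_self, count_cons_self, Nat.choose_succ_succ', add_mul, add_comm]
    · have hzero : count κ (map (cons a) t.powerset) = 0 :=
        count_eq_zero.mpr fun h => by
          obtain ⟨x, -, rfl⟩ := mem_map.mp h
          exact ha (mem_cons_self a x)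
      rw [hzero, add_zero, ih κ hs]
      refine prod_congr rfl fun i _ => ?_
      rcases eq_or_ne i a with rfl | hia
      · simp [count_eq_zero_of_notMem ha]
      · rw [count_cons_of_ne hia]

theorem prod_map_eq_prod_pow_count {M : Type*} [CommMonoid M] (m : Multiset α) (f : α → M)
    {s : Finset α} (hs : m.toFinset ⊆ s) : (m.map f).prod = ∏ i ∈ s, f i ^ m.count i := by
  rw [Finset.prod_multiset_map_count]
  exact prod_subset hs fun i _ hi => by rw [count_eq_zero_of_notMem (by simpa using hi), pow_zero]

theorem sum_powerset_prod_choose_mul_pow {R : Type*} [CommSemiring R] (l : Multiset α)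
    (x : α → R) {s : Finset α} (hs : l.toFinset ⊆ s) :
    ∑ κ ∈ l.powerset.toFinset,
        ∏ i ∈ s, ((l.count i).choose (κ.count i) : R) * x i ^ (l.count i - κ.count i) =
      (l.map fun p => x p + 1).prod := by
  have hterm : ∀ κ ∈ l.powerset.toFinset,
      ∏ i ∈ s, ((l.count i).choose (κ.count i) : R) * x i ^ (l.count i - κ.count i) =
        (powerset l).count κ • ((l - κ).map x).prod := by
    intro κ hκ
    have hle : κ ≤ l := mem_powerset.mp (mem_toFinset.mp hκ)
    have hsub {m : Multiset α} (hm : m ≤ l) : m.toFinset ⊆ s :=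
      (toFinset_subset.mpr (subset_of_le hm)).trans hs
    rw [prod_mul_distrib, ← Nat.cast_prod, ← count_powerset_eq_prod_choose l κ (hsub hle),
      prod_map_eq_prod_pow_count (l - κ) x (hsub tsub_le_self), nsmul_eq_mul]
    simp only [count_sub]
  rw [sum_congr rfl hterm, ← Finset.sum_multiset_map_count, prod_map_add (g := fun _ => 1),
    antidiagonal_eq_map_powerset, map_map]
  simp

end Multiset

namespace Nat.Partition

theorem parts_toFinset_subset_Icc {n : ℕ} (μ : n.Partition) : μ.parts.toFinset ⊆ Icc 1 n :=
  fun _ hp => mem_Icc.mpr ⟨μ.parts_pos (Multiset.mem_toFinset.mp hp),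
    le_of_mem_parts (Multiset.mem_toFinset.mp hp)⟩

theorem sum_lt_of_lt_parts {n : ℕ} (μ : n.Partition) {κ : Multiset ℕ} (hκ : κ < μ.parts) :
    κ.sum < n := by
  obtain ⟨d, hd⟩ := Multiset.le_iff_exists_add.mp hκ.le
  have hd0 : d ≠ 0 := by rintro rfl; exact hκ.ne (by simpa using hd.symm)
  obtain ⟨a, ha⟩ := Multiset.exists_mem_of_ne_zero hd0
  have hpos : 0 < a := μ.parts_pos (hd ▸ Multiset.mem_add.mpr (Or.inr ha))
  have hsum : κ.sum + d.sum = n := by rw [← Multiset.sum_add, ← hd, μ.parts_sum]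
  have := Multiset.le_sum_of_mem ha
  omega

def partitionWithPartsEquiv {n : ℕ} {κ : Multiset ℕ} (hκ : ∀ p ∈ κ, 0 < p) (hsum : κ.sum ≤ n) :
    {ν : n.Partition // κ ≤ ν.parts} ≃ (n - κ.sum).Partition where
  toFun ν :=
    { parts := ν.1.parts - κ
      parts_pos := fun hi => ν.1.parts_pos (Multiset.mem_of_le tsub_le_self hi)
      parts_sum := by
        have := congrArg Multiset.sum (tsub_add_cancel_of_le ν.2)
        rw [Multiset.sum_add, ν.1.parts_sum] at this
        omega }
  invFun μ :=
    ⟨{ parts := μ.parts + κ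
       parts_pos := fun hi => (Multiset.mem_add.mp hi).elim μ.parts_pos (hκ _)
       parts_sum := by rw [Multiset.sum_add, μ.parts_sum]; omega },
      Multiset.le_add_left _ _⟩
  left_inv ν := Subtype.ext <| Nat.Partition.ext <| tsub_add_cancel_of_le ν.2
  right_inv μ := Nat.Partition.ext <| add_tsub_cancel_right _ _

theorem sum_filter_le_parts {M : Type*} [AddCommMonoid M] {n : ℕ} {κ : Multiset ℕ}
    (hκ : ∀ p ∈ κ, 0 < p) (hsum : κ.sum ≤ n) (G : Multiset ℕ → M) :
    ∑ ν : n.Partition with κ ≤ ν.parts, G (ν.parts - κ) =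
      ∑ μ : (n - κ.sum).Partition, G μ.parts := by
  rw [Finset.sum_subtype (p := fun ν : n.Partition => κ ≤ ν.parts) _ fun ν => by simp]
  exact Fintype.sum_equiv (partitionWithPartsEquiv hκ hsum) _ _ fun ν => rfl

end Nat.Partition

theorem zWeight_eq_prod_of_subset {m : Multiset ℕ} {s : Finset ℕ} (hs : m.toFinset ⊆ s) :
    zWeight m = ∏ i ∈ s, i ^ m.count i * (m.count i).factorial :=
  prod_subset hs fun i _ hi => by simp [Multiset.count_eq_zero_of_notMem (by simpa using hi)]

theorem zWeight_pos {m : Multiset ℕ} (hm : ∀ p ∈ m, 0 < p) : 0 < zWeight m :=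
  prod_pos fun i hi => by
    have := hm i (Multiset.mem_toFinset.mp hi)
    positivity

theorem zWeight_eq_mul_zWeight_erase {m : Multiset ℕ} {r : ℕ} (hr : r ∈ m) :
    zWeight m = r * m.count r * zWeight (m.erase r) := by
  have hmem : r ∈ m.toFinset := Multiset.mem_toFinset.mpr hr
  have hrest : ∏ i ∈ m.toFinset.erase r, i ^ m.count i * (m.count i).factorial =
      ∏ i ∈ m.toFinset.erase r, i ^ (m.erase r).count i * ((m.erase r).count i).factorial :=
    prod_congr rfl fun i hi => by rw [Multiset.count_erase_of_ne (ne_of_mem_erase hi)]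
  rw [zWeight, zWeight_eq_prod_of_subset (Multiset.toFinset_subset.mpr (Multiset.erase_subset r m)),
    ← mul_prod_erase _ _ hmem, ← mul_prod_erase _ _ hmem, hrest, Multiset.count_erase_self]
  obtain ⟨c, hc⟩ := Nat.exists_eq_add_one.mpr (Multiset.count_pos.mpr hr)
  rw [hc, Nat.add_sub_cancel, Nat.factorial_succ, pow_succ]
  ring

noncomputable def pDivZ (f : ℕ → ℝ) (m : Multiset ℕ) : ℝ :=
  (zWeight m : ℝ)⁻¹ * (m.map f).prod

/-- `h_n = ∑_{μ ⊢ n} p_μ / z_μ` under the specialization `p_r ↦ f r`. -/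
noncomputable def completeH (f : ℕ → ℝ) (n : ℕ) : ℝ :=
  ∑ μ : n.Partition, pDivZ f μ.parts

theorem mul_pDivZ_eq_pDivZ_erase (f : ℕ → ℝ) {m : Multiset ℕ} (hm : ∀ p ∈ m, 0 < p) {r : ℕ}
    (hr : r ∈ m) : (r * m.count r : ℝ) * pDivZ f m = f r * pDivZ f (m.erase r) := by
  have hz : (zWeight (m.erase r) : ℝ) ≠ 0 :=
    Nat.cast_ne_zero.mpr (zWeight_pos fun p hp => hm p (Multiset.mem_of_mem_erase hp)).ne'
  have hr0 : (r : ℝ) ≠ 0 := Nat.cast_ne_zero.mpr (hm r hr).ne'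
  have hc0 : (m.count r : ℝ) ≠ 0 := Nat.cast_ne_zero.mpr (Multiset.count_pos.mpr hr).ne'
  have hprod : (m.map f).prod = f r * ((m.erase r).map f).prod := by
    rw [← Multiset.prod_cons, ← Multiset.map_cons, Multiset.cons_erase hr]
  rw [pDivZ, pDivZ, zWeight_eq_mul_zWeight_erase hr, hprod]
  push_cast
  field_simp

theorem sum_mul_pDivZ (f : ℕ → ℝ) {m : Multiset ℕ} (hm : ∀ p ∈ m, 0 < p) :
    (m.sum : ℝ) * pDivZ f m = ∑ r ∈ m.toFinset, f r * pDivZ f (m.erase r) := by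
  rw [Finset.sum_multiset_count m, Nat.cast_sum, sum_mul]
  refine sum_congr rfl fun r hr => ?_
  rw [smul_eq_mul, Nat.cast_mul, mul_comm (m.count r : ℝ),
    mul_pDivZ_eq_pDivZ_erase f hm (Multiset.mem_toFinset.mp hr)]

-- Newton's identity: expand `n = ∑_r r · a_r(μ)` and use `r · a_r(μ) / z_μ = 1 / z_{μ ∖ r}`.
theorem nat_mul_completeH (f : ℕ → ℝ) (n : ℕ) :
    n * completeH f n = ∑ r ∈ Icc 1 n, f r * completeH f (n - r) := by
  calc (n : ℝ) * completeH f n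
      = ∑ μ : n.Partition, ∑ r ∈ μ.parts.toFinset, f r * pDivZ f (μ.parts - {r}) := by
        rw [completeH, mul_sum]
        refine sum_congr rfl fun μ _ => ?_
        simp only [Multiset.sub_singleton]
        rw [← sum_mul_pDivZ f fun _ => μ.parts_pos, μ.parts_sum]
    _ = ∑ r ∈ Icc 1 n, ∑ μ : n.Partition with {r} ≤ μ.parts, f r * pDivZ f (μ.parts - {r}) :=
        sum_comm' fun μ r => by
          simp only [mem_univ, Multiset.mem_toFinset, true_and, mem_filter, mem_Icc,
            Multiset.singleton_le]
          exact ⟨fun h => ⟨h, μ.parts_pos h, μ.le_of_mem_parts h⟩, fun h => h.1⟩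
    _ = ∑ r ∈ Icc 1 n, f r * completeH f (n - r) := sum_congr rfl fun r hr => by
        have hr := mem_Icc.mp hr
        rw [← mul_sum, Nat.Partition.sum_filter_le_parts (κ := {r})
          (by simp only [Multiset.mem_singleton, forall_eq]; omega) (by simpa using hr.2),
          Multiset.sum_singleton, completeH]

theorem completeH_zero (f : ℕ → ℝ) : completeH f 0 = 1 := by
  simp [completeH, pDivZ, zWeight]

theorem sum_Icc_one_sub_pow_mul (u : ℝ) (n : ℕ) :
    ∑ r ∈ Icc 1 n, (1 - u ^ r) * (1 - u) = n * (1 - u) - u * (1 - u ^ n) := by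
  induction n with
  | zero => simp
  | succ n ih =>
    rw [sum_Icc_succ_top (by omega), ih]
    push_cast
    ring

theorem completeH_one_sub_pow (u : ℝ) {n : ℕ} (hn : n ≠ 0) :
    completeH (fun r => 1 - u ^ r) n = 1 - u := by
  induction n using Nat.strong_induction_on with
  | _ n ih =>
  obtain ⟨m, rfl⟩ := Nat.exists_eq_add_one.mpr (Nat.pos_of_ne_zero hn)
  have hrec := nat_mul_completeH (fun r => 1 - u ^ r) (m + 1)
  have hlower : ∀ r ∈ Icc 1 m,
      (1 - u ^ r) * completeH (fun r => 1 - u ^ r) (m + 1 - r) = (1 - u ^ r) * (1 - u) :=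
    fun r hr => by
      have hr := mem_Icc.mp hr
      rw [ih (m + 1 - r) (by omega) (by omega)]
  rw [sum_Icc_succ_top (by omega), sum_congr rfl hlower, sum_Icc_one_sub_pow_mul, Nat.sub_self,
    completeH_zero] at hrec
  refine mul_left_cancel₀ (Nat.cast_ne_zero.mpr hn) (hrec.trans ?_)
  push_cast
  ring

theorem piInf_eq_mul_pDivZ (t : ℝ) (m : Multiset ℕ) :
    piInf t m = t / (t - 1) * pDivZ (fun p => 1 - t⁻¹ ^ p) m := by
  rw [piInf, pDivZ, mul_assoc]

theorem sum_piInf {t : ℝ} (ht₀ : t ≠ 0) (ht₁ : t ≠ 1) {n : ℕ} (hn : n ≠ 0) :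
    ∑ μ : n.Partition, piInf t μ.parts = 1 := by
  simp only [piInf_eq_mul_pDivZ, ← mul_sum]
  rw [← completeH, completeH_one_sub_pow _ hn]
  have : t - 1 ≠ 0 := sub_ne_zero.mpr ht₁
  field_simp

theorem piInf_pos {t : ℝ} (ht : 1 < t) {m : Multiset ℕ} (hm : ∀ p ∈ m, 0 < p) :
    0 < piInf t m := by
  have hz : 0 < zWeight m := zWeight_pos hm
  refine mul_pos (mul_pos (div_pos (by linarith) (by linarith)) (by positivity))
    (Multiset.prod_pos fun x hx => ?_)
  obtain ⟨p, hp, rfl⟩ := Multiset.mem_map.mp hx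
  exact sub_pos.mpr (pow_lt_one₀ (by positivity) (inv_lt_one_of_one_lt₀ ht) (hm p hp).ne')

theorem wKeep_pos {q : ℝ} (hq : 1 < q) {k : ℕ} (hk : k ≠ 0) {l κ : Multiset ℕ} (hκ : κ ≤ l) :
    0 < wKeep q k l κ := by
  have hpow {i : ℕ} (hi : i ≠ 0) : 0 < q ^ i - 1 := sub_pos.mpr (one_lt_pow₀ hq hi)
  refine mul_pos (inv_pos.mpr (hpow hk)) (prod_pos fun i hi => mul_pos ?_ (pow_pos (hpow ?_) _))
  · exact_mod_cast Nat.choose_pos (Multiset.le_iff_count.mp hκ i)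
  · exact (Nat.one_le_iff_ne_zero.mp (mem_Icc.mp hi).1)

theorem wKeep_self (q : ℝ) (k : ℕ) (l : Multiset ℕ) : wKeep q k l l = (q ^ k - 1)⁻¹ := by
  simp [wKeep]

theorem sum_wKeep (q : ℝ) {k : ℕ} (μ : k.Partition) :
    ∑ κ ∈ μ.parts.powerset.toFinset, wKeep q k μ.parts κ = (q ^ k - 1)⁻¹ * q ^ k := by
  have hpow (m : Multiset ℕ) : (m.map (q ^ ·)).prod = q ^ m.sum :=
    Multiset.induction_on m (by simp) fun a m ih => by simp [ih, pow_add]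
  simp only [wKeep, ← mul_sum]
  rw [Multiset.sum_powerset_prod_choose_mul_pow _ (fun i => q ^ i - 1)
    μ.parts_toFinset_subset_Icc]
  simp only [sub_add_cancel, hpow, μ.parts_sum]

theorem sum_auxM {t : ℝ} (ht : 1 < t) (q : ℝ) (k : ℕ) (l : k.Partition) :
    ∑ ν, auxM q t k l ν = ∑ κ ∈ l.parts.powerset.toFinset.erase l.parts, wKeep q k l.parts κ := by
  calc ∑ ν, auxM q t k l ν
      = ∑ κ ∈ l.parts.powerset.toFinset.erase l.parts,
          ∑ ν : k.Partition with κ ≤ ν.parts, wKeep q k l.parts κ * piInf t (ν.parts - κ) :=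
        sum_comm' fun ν κ => by
          simp only [mem_univ, mem_filter, mem_erase, true_and]
          tauto
    _ = _ := sum_congr rfl fun κ hκ => by
        obtain ⟨hne, hmem⟩ := mem_erase.mp hκ
        have hle : κ ≤ l.parts := Multiset.mem_powerset.mp (Multiset.mem_toFinset.mp hmem)
        have hlt := l.sum_lt_of_lt_parts (lt_of_le_of_ne hle hne)
        rw [← mul_sum, Nat.Partition.sum_filter_le_parts
          (fun p hp => l.parts_pos (Multiset.mem_of_le hle hp)) hlt.le,
          sum_piInf (by positivity) ht.ne' (by omega), mul_one]

theorem auxM_pos {q t : ℝ} (hq : 1 < q) (ht : 1 < t) {k : ℕ} (hk : k ≠ 0) (l ν : k.Partition) :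
    0 < auxM q t k l ν := by
  refine sum_pos (fun κ hκ => ?_) ⟨0, ?_⟩
  · simp only [mem_filter, Multiset.mem_toFinset, Multiset.mem_powerset] at hκ
    exact mul_pos (wKeep_pos hq hk hκ.1)
      (piInf_pos ht fun p hp => ν.parts_pos (Multiset.mem_of_le tsub_le_self hp))
  · have hl : l.parts ≠ 0 := fun h => hk (by simpa [h] using l.parts_sum.symm)
    simpa using hl.symm

/-- The auxiliary variables kernel is a strictly positive stochastic matrix. -/
theorem auxM_stochastic_pos
    (q t : ℝ) (hq : 1 < q) (ht : 1 < t) (k : ℕ) (hk : 1 ≤ k) :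
    ∀ l : Nat.Partition k,
      (∑ ν : Nat.Partition k, auxM q t k l ν) = 1 ∧
      (∀ ν : Nat.Partition k, 0 < auxM q t k l ν) := by
  intro l
  refine ⟨?_, auxM_pos hq ht (by omega) l⟩
  have hqk : q ^ k - 1 ≠ 0 := (sub_pos.mpr (one_lt_pow₀ hq (by omega))).ne'
  rw [sum_auxM ht, sum_erase_eq_sub (Multiset.mem_toFinset.mpr (Multiset.mem_powerset.mpr le_rfl)),
    sum_wKeep, wKeep_self]
  field_simp
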